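/- arXiv:2104.12630 — 2 statements merged into one kernel-verified Lean document; each statement's English description precedes it below -/
import Mathlib

section
/- Coercivity of the generative prior: Under the same assumptions, G : L^q(Ω) → [0,∞] is proper (G(0) = 0) and coercive: if ‖v_m‖_q → ∞ then G(v_m) → ∞. -/
open MeasureTheory Filter Topology Pointwise

/-- Integral of a function against a finite signed Radon measure. -/
noncomputable def sInt {d : ℕ} (μ : SignedMeasure (Fin d → ℝ)) (f : (Fin d → ℝ) → ℝ) : ℝ :=
  (∫ x, f x ∂μ.toJordanDecomposition.posPart) - ∫ x, f x ∂μ.toJordanDecomposition.negPart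

/-- Total variation (Radon) norm of a finite signed Radon measure. -/
noncomputable def Mnorm {d : ℕ} (μ : SignedMeasure (Fin d → ℝ)) : ℝ :=
  (μ.totalVariation Set.univ).toReal

/-- Pointwise convolution of a finite signed Radon measure with a function. -/
noncomputable def mconv {d : ℕ} (μ : SignedMeasure (Fin d → ℝ)) (g : (Fin d → ℝ) → ℝ) :
    (Fin d → ℝ) → ℝ := fun x => sInt μ (fun y => g (x - y))

/-- Recursively dilated domains: `Dom 0 = Ω`, `Dom (l+1) = Dom l − Σ`
(so `Dom l` plays the role of `Ω^l` in the paper). -/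
def Dom {d : ℕ} (Ω S : Set (Fin d → ℝ)) : ℕ → Set (Fin d → ℝ)
  | 0 => Ω
  | l + 1 => Dom Ω S l - S

/-- The space of latent variables: `μ l n` is the `n`-th latent measure of layer `l`. -/
abbrev LatV (d : ℕ) := ℕ → ℕ → MeasureTheory.SignedMeasure (Fin d → ℝ)

/-- The space of filter kernels: `θ l n k` is the kernel attached to edge `(n,k)` of layer `l`. -/
abbrev KerV (d : ℕ) := ℕ → ℕ → ℕ → (Fin d → ℝ) → ℝ

/-- The layer convolution `(μ^l *_l θ^l)_k = Σ_{(n,k) ∈ E^l} μ^l_n * θ^l_{n,k}`. -/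
noncomputable def layerConv {d : ℕ} (E : ℕ → Finset (ℕ × ℕ)) (μ : LatV d) (θ : KerV d)
    (l k : ℕ) : (Fin d → ℝ) → ℝ :=
  fun x => ∑ p ∈ (E l).filter (fun p => p.2 = k), mconv (μ l p.1) (θ l p.1 p.2) x

/-- The feasible set `F(v)` of the generative prior: `v = μ¹ *₁ θ¹` (a.e. on `Ω`), the latent
measures of layer `l` live on `Ω^l`, the kernels belong to the unit ball of `L²(Σ)`, and the
additional linear constraint `Zθ = 0` holds. -/
def Feasible {d : ℕ} (Ω S : Set (Fin d → ℝ)) (L : ℕ) (N : ℕ → ℕ)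
    (E : ℕ → Finset (ℕ × ℕ)) {Nc : ℕ} (Z : KerV d →ₗ[ℝ] (Fin Nc → ℝ))
    (v : (Fin d → ℝ) → ℝ) (μ : LatV d) (θ : KerV d) : Prop :=
  (v =ᵐ[volume.restrict Ω] layerConv E μ θ 1 0) ∧
  (∀ l ∈ Finset.Icc 1 L, ∀ n < N l, (μ l n).totalVariation (Dom Ω S l)ᶜ = 0) ∧
  (∀ l n k, MemLp (θ l n k) 2 (volume.restrict S) ∧ (∀ x ∉ S, θ l n k x = 0) ∧
    eLpNorm (θ l n k) 2 (volume.restrict S) ≤ 1) ∧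
  Z θ = 0

/-- The cost `G(μ,θ) = ‖μ‖_M + Σ_{l=2}^L J_{l−1}(μ^{l−1} − μ^l *_l θ^l)`, the convolution
output being identified with a signed measure on `Ω^{l−1}` via integration. -/
noncomputable def Gcost {d : ℕ} (Ω S : Set (Fin d → ℝ)) (L : ℕ) (N : ℕ → ℕ)
    (E : ℕ → Finset (ℕ × ℕ))
    (J : ℕ → (ℕ → MeasureTheory.SignedMeasure (Fin d → ℝ)) → ENNReal)
    (μ : LatV d) (θ : KerV d) : ENNReal :=
  (∑ l ∈ Finset.Icc 1 L, ∑ n ∈ Finset.range (N l), ENNReal.ofReal (Mnorm (μ l n))) +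
  ∑ l ∈ Finset.Icc 2 L, J (l - 1) (fun n =>
    μ (l - 1) n - (volume.restrict (Dom Ω S (l - 1))).withDensityᵥ (layerConv E μ θ l n))

/-- The generative prior `G(v) = inf_{(μ,θ) ∈ F(v)} G(μ,θ)` (with value `∞` if `F(v) = ∅`). -/
noncomputable def GenPrior {d : ℕ} (Ω S : Set (Fin d → ℝ)) (L : ℕ) (N : ℕ → ℕ)
    (E : ℕ → Finset (ℕ × ℕ)) {Nc : ℕ} (Z : KerV d →ₗ[ℝ] (Fin Nc → ℝ))
    (J : ℕ → (ℕ → MeasureTheory.SignedMeasure (Fin d → ℝ)) → ENNReal)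
    (v : (Fin d → ℝ) → ℝ) : ENNReal :=
  ⨅ (μ : LatV d) (θ : KerV d) (_ : Feasible Ω S L N E Z v μ θ), Gcost Ω S L N E J μ θ

/-!
For every feasible `(μ, θ)` we have `v = Σₙ μ¹ₙ * θ¹ₙ` on `Ω`. Young's inequality for a measure
convolved with an `Lᵖ` function gives `‖μ¹ₙ * θ¹ₙ‖_q ≤ ‖μ¹ₙ‖_M ‖θ¹ₙ‖_q`, and since the kernel
lives on the bounded set `Σ`, Hölder gives `‖θ¹ₙ‖_q ≤ |Σ|^{1/q - 1/2} ‖θ¹ₙ‖₂ ≤ |Σ|^{1/q - 1/2}`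
(this is where `q ≤ 2` enters). Hence `‖v‖_q ≤ |Σ|^{1/q - 1/2} Σₙ ‖μ¹ₙ‖_M ≤ |Σ|^{1/q - 1/2} G(v)`,
which is coercivity. Properness: all-zero latent measures and kernels are feasible for `v = 0`
and cost nothing because `J_l(0) = 0`.
-/

open scoped ENNReal

/-- No measurability is needed: `∫⁻` is attained by a measurable minorant. -/
theorem lintegral_rpow_le_measure_univ_rpow_mul {α : Type*} [MeasurableSpace α] (ν : Measure α)
    (h : α → ℝ≥0∞) {q : ℝ} (hq : 1 ≤ q) :
    (∫⁻ a, h a ∂ν) ^ q ≤ ν Set.univ ^ (q - 1) * ∫⁻ a, h a ^ q ∂ν := by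
  have hq0 : 0 < q := by linarith
  obtain ⟨g, hg, hgh, hint⟩ := exists_measurable_le_lintegral_eq ν h
  have hHolder := eLpNorm_le_eLpNorm_mul_rpow_measure_univ (μ := ν) (p := 1)
    (q := ENNReal.ofReal q) (by simpa using hq) hg.aestronglyMeasurable
  rw [eLpNorm_one_eq_lintegral_enorm, eLpNorm_eq_lintegral_rpow_enorm_toReal (by simpa using hq0)
    ENNReal.ofReal_ne_top, ENNReal.toReal_ofReal hq0.le] at hHolder
  simp only [enorm_eq_self, ENNReal.toReal_one, div_one] at hHolder
  calc (∫⁻ a, h a ∂ν) ^ q = (∫⁻ a, g a ∂ν) ^ q := by rw [hint]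
    _ ≤ ((∫⁻ a, g a ^ q ∂ν) ^ (1 / q) * ν Set.univ ^ (1 - 1 / q)) ^ q := by gcongr
    _ = ν Set.univ ^ (q - 1) * ∫⁻ a, g a ^ q ∂ν := by
      rw [ENNReal.mul_rpow_of_nonneg _ _ hq0.le, ← ENNReal.rpow_mul, ← ENNReal.rpow_mul,
        one_div_mul_cancel hq0.ne', ENNReal.rpow_one, mul_comm]
      congr 2
      field_simp
    _ ≤ ν Set.univ ^ (q - 1) * ∫⁻ a, h a ^ q ∂ν := by gcongr with a; exact hgh a

section Young

variable {G : Type*} [MeasurableSpace G] [AddGroup G] [MeasurableAdd₂ G] [MeasurableNeg G]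
  {μ : Measure G} [SFinite μ] [μ.IsAddRightInvariant] (ν : Measure G) [SFinite ν]

theorem AEMeasurable.comp_sub_prod {β : Type*} [MeasurableSpace β] {f : G → β}
    (hf : AEMeasurable f μ) : AEMeasurable (fun z : G × G => f (z.1 - z.2)) (μ.prod ν) :=
  (hf.comp_quasiMeasurePreserving (Measure.quasiMeasurePreserving_fst (ν := ν)))
    |>.comp_quasiMeasurePreserving (measurePreserving_sub_prod μ ν).quasiMeasurePreserving

theorem lintegral_rpow_lintegral_sub_le {f : G → ℝ≥0∞} (hf : AEMeasurable f μ) {q : ℝ}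
    (hq : 1 ≤ q) :
    ∫⁻ x, (∫⁻ y, f (x - y) ∂ν) ^ q ∂μ ≤ ν Set.univ ^ q * ∫⁻ z, f z ^ q ∂μ := by
  have hjoint : AEMeasurable (fun z : G × G => f (z.1 - z.2) ^ q) (μ.prod ν) :=
    (hf.comp_sub_prod ν).pow_const q
  calc ∫⁻ x, (∫⁻ y, f (x - y) ∂ν) ^ q ∂μ
      ≤ ∫⁻ x, ν Set.univ ^ (q - 1) * ∫⁻ y, f (x - y) ^ q ∂ν ∂μ :=
        lintegral_mono fun x => lintegral_rpow_le_measure_univ_rpow_mul ν _ hq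
    _ = ν Set.univ ^ (q - 1) * ∫⁻ y, ∫⁻ x, f (x - y) ^ q ∂μ ∂ν := by
        rw [lintegral_const_mul'' _ hjoint.lintegral_prod_right', lintegral_lintegral_swap hjoint]
    _ = ν Set.univ ^ q * ∫⁻ z, f z ^ q ∂μ := by
        have hpow : ν Set.univ ^ (q - 1) * ν Set.univ = ν Set.univ ^ q := by
          conv_rhs => rw [← sub_add_cancel q 1,
            ENNReal.rpow_add_of_nonneg _ _ (by linarith) zero_le_one, ENNReal.rpow_one]
        simp_rw [lintegral_sub_right_eq_self (fun z => f z ^ q), lintegral_const, ← hpow]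
        ring

theorem eLpNorm_lintegral_sub_le {f : G → ℝ≥0∞} (hf : AEMeasurable f μ) {p : ℝ≥0∞}
    (hp : 1 ≤ p) (hp_top : p ≠ ∞) :
    eLpNorm (fun x => ∫⁻ y, f (x - y) ∂ν) p μ ≤ ν Set.univ * eLpNorm f p μ := by
  have hp0 : p ≠ 0 := (zero_lt_one.trans_le hp).ne'
  have hq : 1 ≤ p.toReal := by
    simpa using ENNReal.toReal_mono hp_top hp
  have hq0 : 0 < p.toReal := by linarith
  simp only [eLpNorm_eq_lintegral_rpow_enorm_toReal hp0 hp_top, enorm_eq_self]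
  calc (∫⁻ x, (∫⁻ y, f (x - y) ∂ν) ^ p.toReal ∂μ) ^ (1 / p.toReal)
      ≤ (ν Set.univ ^ p.toReal * ∫⁻ z, f z ^ p.toReal ∂μ) ^ (1 / p.toReal) := by
        gcongr; exact lintegral_rpow_lintegral_sub_le ν hf hq
    _ = ν Set.univ * (∫⁻ z, f z ^ p.toReal ∂μ) ^ (1 / p.toReal) := by
        rw [ENNReal.mul_rpow_of_nonneg _ _ (by positivity), one_div,
          ENNReal.rpow_rpow_inv hq0.ne']

end Young

theorem enorm_mconv_le {d : ℕ} (μ : SignedMeasure (Fin d → ℝ)) (θ : (Fin d → ℝ) → ℝ)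
    (x : Fin d → ℝ) :
    ‖mconv μ θ x‖ₑ ≤ ∫⁻ y, ‖θ (x - y)‖ₑ ∂μ.totalVariation := by
  rw [SignedMeasure.totalVariation, lintegral_add_measure]
  exact enorm_sub_le.trans
    (add_le_add (enorm_integral_le_lintegral_enorm _) (enorm_integral_le_lintegral_enorm _))

theorem eLpNorm_le_measure_rpow_of_eLpNorm_two_le_one {α E : Type*} [MeasurableSpace α]
    [NormedAddCommGroup E] {μ : Measure α} {S : Set α} {f : α → E} {p : ℝ≥0∞} (hp : p ≤ 2)
    (hf : AEStronglyMeasurable f (μ.restrict S)) (hfS : ∀ x ∉ S, f x = 0)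
    (hf1 : eLpNorm f 2 (μ.restrict S) ≤ 1) :
    eLpNorm f p μ ≤ μ S ^ (1 / p.toReal - 1 / 2) := by
  have hsupp : Function.support f ⊆ S := fun x hx => by_contra fun hxS => hx (hfS x hxS)
  rw [← eLpNorm_restrict_eq_of_support_subset hsupp]
  calc eLpNorm f p (μ.restrict S)
      ≤ eLpNorm f 2 (μ.restrict S) * μ.restrict S Set.univ ^ (1 / p.toReal - 1 / 2) := by
        simpa using eLpNorm_le_eLpNorm_mul_rpow_measure_univ hp hf
    _ ≤ μ S ^ (1 / p.toReal - 1 / 2) := by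
        rw [Measure.restrict_apply_univ]
        exact mul_le_of_le_one_left zero_le hf1

theorem Finset.sum_filter_snd_eq_le_sum {α β M : Type*} [DecidableEq α] [AddCommMonoid M]
    [PartialOrder M] [IsOrderedAddMonoid M] [CanonicallyOrderedAdd M] (E : Finset (α × β)) (k : β)
    [DecidablePred fun p : α × β => p.2 = k] {s : Finset α} (hE : ∀ p ∈ E, p.1 ∈ s)
    (a : α → M) :
    ∑ p ∈ E.filter (fun p => p.2 = k), a p.1 ≤ ∑ n ∈ s, a n := by
  have hinj : Set.InjOn Prod.fst (E.filter fun p => p.2 = k : Set (α × β)) := by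
    intro p hp p' hp' h
    rw [Finset.mem_coe, Finset.mem_filter] at hp hp'
    exact Prod.ext h (hp.2.trans hp'.2.symm)
  rw [← Finset.sum_image hinj]
  refine Finset.sum_le_sum_of_subset fun n hn => ?_
  obtain ⟨p, hp, rfl⟩ := Finset.mem_image.mp hn
  exact hE p (Finset.mem_filter.mp hp).1

section GenerativePrior

variable {d : ℕ} {Ω S : Set (Fin d → ℝ)} {L : ℕ} {N : ℕ → ℕ} {E : ℕ → Finset (ℕ × ℕ)} {Nc : ℕ}
  {Z : KerV d →ₗ[ℝ] (Fin Nc → ℝ)} {J : ℕ → (ℕ → SignedMeasure (Fin d → ℝ)) → ℝ≥0∞}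

theorem eLpNorm_le_of_feasible (hS : MeasurableSet S) (hE : ∀ e ∈ E 1, e.1 < N 1)
    {p : ℝ≥0∞} (hp1 : 1 ≤ p) (hp2 : p ≤ 2) {v : (Fin d → ℝ) → ℝ} {μ : LatV d} {θ : KerV d}
    (hfeas : Feasible Ω S L N E Z v μ θ) :
    eLpNorm v p (volume.restrict Ω) ≤ volume S ^ (1 / p.toReal - 1 / 2) *
      ∑ n ∈ Finset.range (N 1), ENNReal.ofReal (Mnorm (μ 1 n)) := by
  classical
  obtain ⟨hv, -, hθ, -⟩ := hfeas
  set C := volume S ^ (1 / p.toReal - 1 / 2)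
  set T := (E 1).filter fun e => e.2 = 0
  set H : ℕ × ℕ → (Fin d → ℝ) → ℝ≥0∞ :=
    fun e x => ∫⁻ y, ‖θ 1 e.1 e.2 (x - y)‖ₑ ∂(μ 1 e.1).totalVariation
  have hθm (e : ℕ × ℕ) : AEMeasurable (fun x => ‖θ 1 e.1 e.2 x‖ₑ) volume := by
    have hind : S.indicator (θ 1 e.1 e.2) = θ 1 e.1 e.2 :=
      Set.indicator_eq_self.mpr fun x hx => by_contra fun hxS => hx ((hθ 1 e.1 e.2).2.1 x hxS)
    exact (hind ▸ (aestronglyMeasurable_indicator_iff hS).mpr (hθ 1 e.1 e.2).1.1).enorm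
  have hH (e : ℕ × ℕ) : eLpNorm (H e) p volume ≤ (μ 1 e.1).totalVariation Set.univ * C := by
    refine (eLpNorm_lintegral_sub_le _ (hθm e) hp1 (ne_top_of_le_ne_top (by simp) hp2)).trans ?_
    rw [eLpNorm_enorm]
    gcongr
    exact eLpNorm_le_measure_rpow_of_eLpNorm_two_le_one hp2 (hθ 1 e.1 e.2).1.1
      (hθ 1 e.1 e.2).2.1 (hθ 1 e.1 e.2).2.2
  have hdom (x : Fin d → ℝ) : ‖layerConv E μ θ 1 0 x‖ₑ ≤ ‖(∑ e ∈ T, H e) x‖ₑ := by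
    rw [enorm_eq_self, Finset.sum_apply]
    exact enorm_sum_le _ _ |>.trans (Finset.sum_le_sum fun e _ => enorm_mconv_le _ _ x)
  calc eLpNorm v p (volume.restrict Ω) = eLpNorm (layerConv E μ θ 1 0) p (volume.restrict Ω) :=
        eLpNorm_congr_ae hv
    _ ≤ eLpNorm (∑ e ∈ T, H e) p volume :=
        (eLpNorm_mono_enorm hdom).trans (eLpNorm_mono_measure _ Measure.restrict_le_self)
    _ ≤ ∑ e ∈ T, eLpNorm (H e) p volume := eLpNorm_sum_le (fun e _ =>
        ((hθm e).comp_sub_prod _).lintegral_prod_right'.aestronglyMeasurable) hp1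
    _ ≤ ∑ e ∈ T, (μ 1 e.1).totalVariation Set.univ * C := Finset.sum_le_sum fun e _ => hH e
    _ = C * ∑ e ∈ T, ENNReal.ofReal (Mnorm (μ 1 e.1)) := by
        simp only [Finset.mul_sum, Mnorm, ENNReal.ofReal_toReal (measure_ne_top _ _), mul_comm]
    _ ≤ C * ∑ n ∈ Finset.range (N 1), ENNReal.ofReal (Mnorm (μ 1 n)) := by
        gcongr
        exact Finset.sum_filter_snd_eq_le_sum _ _ (fun e he => Finset.mem_range.mpr (hE e he))
          fun n => ENNReal.ofReal (Mnorm (μ 1 n))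

theorem sum_mnorm_le_gcost (hL : 1 ≤ L) (μ : LatV d) (θ : KerV d) :
    ∑ n ∈ Finset.range (N 1), ENNReal.ofReal (Mnorm (μ 1 n)) ≤ Gcost Ω S L N E J μ θ :=
  (Finset.single_le_sum (f := fun l => ∑ n ∈ Finset.range (N l), ENNReal.ofReal (Mnorm (μ l n)))
    (fun _ _ => zero_le) (Finset.mem_Icc.mpr ⟨le_rfl, hL⟩)).trans le_self_add

theorem eLpNorm_div_le_genPrior (hS : MeasurableSet S) (hL : 1 ≤ L)
    (hE : ∀ e ∈ E 1, e.1 < N 1) {p : ℝ≥0∞} (hp1 : 1 ≤ p) (hp2 : p ≤ 2) (v : (Fin d → ℝ) → ℝ) :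
    eLpNorm v p (volume.restrict Ω) / volume S ^ (1 / p.toReal - 1 / 2) ≤
      GenPrior Ω S L N E Z J v :=
  le_iInf₂ fun μ θ => le_iInf fun hfeas => ENNReal.div_le_of_le_mul <|
    (eLpNorm_le_of_feasible hS hE hp1 hp2 hfeas).trans <| by
      rw [mul_comm]; gcongr; exact sum_mnorm_le_gcost hL μ θ

theorem layerConv_zero_left (θ : KerV d) (l k : ℕ) : layerConv E 0 θ l k = 0 := by
  funext x
  simp [layerConv, mconv, sInt, SignedMeasure.toJordanDecomposition_zero]

theorem feasible_zero : Feasible Ω S L N E Z 0 0 0 := by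
  refine ⟨by rw [layerConv_zero_left], fun _ _ _ _ => ?_, fun _ _ _ => ?_, map_zero Z⟩
  · simp [SignedMeasure.totalVariation_zero]
  · exact ⟨MemLp.zero', fun _ _ => rfl, by simp⟩

theorem gcost_zero (hJ0 : ∀ l, J l (fun _ => 0) = 0) : Gcost Ω S L N E J 0 0 = 0 := by
  simp [Gcost, Mnorm, SignedMeasure.totalVariation_zero, layerConv_zero_left, hJ0]

theorem genPrior_zero (hJ0 : ∀ l, J l (fun _ => 0) = 0) : GenPrior Ω S L N E Z J 0 = 0 :=
  nonpos_iff_eq_zero.mp <|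
    (iInf₂_le 0 0).trans <| (iInf_le _ feasible_zero).trans_eq (gcost_zero hJ0)

end GenerativePrior

theorem stmt_10_general {d : ℕ} (Ω S : Set (Fin d → ℝ))
    (hSo : IsOpen S) (hSb : Bornology.IsBounded S)
    (L : ℕ) (hL : 1 ≤ L) (N : ℕ → ℕ)
    (E : ℕ → Finset (ℕ × ℕ))
    (hErange : ∀ l ∈ Finset.Icc 1 L, ∀ p ∈ E l, p.1 < N l ∧ p.2 < N (l - 1))
    {Nc : ℕ} (Z : KerV d →ₗ[ℝ] (Fin Nc → ℝ))
    (J : ℕ → (ℕ → MeasureTheory.SignedMeasure (Fin d → ℝ)) → ENNReal)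
    -- J_l(0) = 0
    (hJ0 : ∀ l, J l (fun _ => 0) = 0)
    (q : ℝ) (hq1 : 1 < q) (hq2 : q ≤ 2)
    :
    GenPrior Ω S L N E Z J (0 : (Fin d → ℝ) → ℝ) = 0 ∧
    ∀ v : ℕ → (Fin d → ℝ) → ℝ,
      (∀ m, MemLp (v m) (ENNReal.ofReal q) (volume.restrict Ω)) →
      Tendsto (fun m => (eLpNorm (v m) (ENNReal.ofReal q) (volume.restrict Ω)).toReal)
        atTop atTop →
      Tendsto (fun m => GenPrior Ω S L N E Z J (v m)) atTop (𝓝 ⊤) := by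
  refine ⟨genPrior_zero hJ0, fun v hv hnorm => ?_⟩
  have hE : ∀ e ∈ E 1, e.1 < N 1 := fun e he => (hErange 1 (by simp [hL]) e he).1
  have hp1 : 1 ≤ ENNReal.ofReal q := ENNReal.one_le_ofReal.mpr hq1.le
  have hp2 : ENNReal.ofReal q ≤ 2 := by simpa using ENNReal.ofReal_le_ofReal hq2
  have hC : volume S ^ (1 / (ENNReal.ofReal q).toReal - 1 / 2) ≠ ∞ := by
    refine ENNReal.rpow_ne_top_of_nonneg ?_ hSb.measure_lt_top.ne
    rw [ENNReal.toReal_ofReal (by linarith), sub_nonneg]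
    gcongr
  have hnorm_top : Tendsto (fun m => eLpNorm (v m) (ENNReal.ofReal q) (volume.restrict Ω))
      atTop (𝓝 ∞) :=
    (ENNReal.tendsto_ofReal_atTop.comp hnorm).congr fun m =>
      ENNReal.ofReal_toReal (hv m).eLpNorm_ne_top
  refine tendsto_nhds_top_mono ?_ (Eventually.of_forall fun m =>
    eLpNorm_div_le_genPrior hSo.measurableSet hL hE hp1 hp2 (v m))
  rw [← ENNReal.top_div_of_ne_top hC]
  exact ENNReal.Tendsto.div_const hnorm_top (Or.inl ENNReal.top_ne_zero)

/-- The generative prior is proper (`G(0) = 0`) and coercive on `L^q(Ω)`: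
`‖v_m‖_q → ∞` implies `G(v_m) → ∞` (Lemma 2.6). -/
theorem stmt_10 {d : ℕ} (Ω S : Set (Fin d → ℝ))
    (hΩo : IsOpen Ω) (hΩb : Bornology.IsBounded Ω)
    (hSo : IsOpen S) (hSb : Bornology.IsBounded S) (h0S : (0 : Fin d → ℝ) ∈ S)
    (L : ℕ) (hL : 1 ≤ L) (N : ℕ → ℕ) (hN0 : N 0 = 1)
    (E : ℕ → Finset (ℕ × ℕ))
    (hErange : ∀ l ∈ Finset.Icc 1 L, ∀ p ∈ E l, p.1 < N l ∧ p.2 < N (l - 1))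
    (hEconn : ∀ l ∈ Finset.Icc 1 L, ∀ n < N l, ∃ k < N (l - 1), (n, k) ∈ E l)
    {Nc : ℕ} (Z : KerV d →ₗ[ℝ] (Fin Nc → ℝ))
    -- Z is weak-to-weak sequentially continuous (equivalently, bounded linear)
    (hZ : ∀ (θm : ℕ → KerV d) (θ : KerV d),
      (∀ l n k, ∀ ψ : (Fin d → ℝ) → ℝ, MemLp ψ 2 (volume.restrict S) →
        Tendsto (fun m => ∫ x in S, θm m l n k x * ψ x) atTop
          (𝓝 (∫ x in S, θ l n k x * ψ x))) →
      Tendsto (fun m => Z (θm m)) atTop (𝓝 (Z θ)))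
    (J : ℕ → (ℕ → MeasureTheory.SignedMeasure (Fin d → ℝ)) → ENNReal)
    -- J_l(0) = 0
    (hJ0 : ∀ l, J l (fun _ => 0) = 0)
    -- each J_l is sequentially weak* lower semicontinuous on M(Ω^l)^{N_l}
    (hJlsc : ∀ l ∈ Finset.Icc 1 L,
      ∀ (νm : ℕ → ℕ → MeasureTheory.SignedMeasure (Fin d → ℝ))
        (ν : ℕ → MeasureTheory.SignedMeasure (Fin d → ℝ)),
      (∀ (n : ℕ) (φ : (Fin d → ℝ) → ℝ), Continuous φ → (∀ x ∉ Dom Ω S l, φ x = 0) →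
        Tendsto (fun m => sInt (νm m n) φ) atTop (𝓝 (sInt (ν n) φ))) →
      J l ν ≤ Filter.liminf (fun m => J l (νm m)) atTop)
    (q : ℝ) (hq1 : 1 < q) (hq2 : q ≤ 2)
    :
    GenPrior Ω S L N E Z J (0 : (Fin d → ℝ) → ℝ) = 0 ∧
    ∀ v : ℕ → (Fin d → ℝ) → ℝ,
      (∀ m, MemLp (v m) (ENNReal.ofReal q) (volume.restrict Ω)) →
      Tendsto (fun m => (eLpNorm (v m) (ENNReal.ofReal q) (volume.restrict Ω)).toReal)
        atTop atTop →
      Tendsto (fun m => GenPrior Ω S L N E Z J (v m)) atTop (𝓝 ⊤) :=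
  stmt_10_general Ω S hSo hSb L hL N E hErange Z J hJ0 q hq1 hq2
end

section
/- Convergence of individual terms along weakly convergent minimizing subsequences: In the stability theorem, if (u_{m_k}, v_{m_k}) ⇀ (u,v) weakly in L^q(Ω)² and E_{y_{m_k}}(u_{m_k},v_{m_k}) → min E_y < ∞, then (u,v) minimizes E_y and additionally D_{y_{m_k}}(Au_{m_k}) → D_y(Au), R(u_{m_k} − v_{m_k}) → R(u − v), and G(v_{m_k}) → G(v). -/
/-!
Along the subsequence, each of the three weighted terms of the energy is bounded below, in the
liminf, by its value at the weak limit: for `R` and `G` this is weak lower semicontinuity, for the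
data term it is the liminf inequality of `D_{y_m}`. Adding the three bounds,
`E_y(u, v) ≤ lim E_{y_m}(u_m, v_m) = min E_y`, so `(u, v)` is a minimizer and the sum of the
liminfs equals the limit of the sums. As this common value is finite, the limsup of each term is
at most the limit of the sum minus the liminfs of the other two, i.e. at most its value at the
weak limit.
-/

open MeasureTheory Filter Topology

/-- Sequential weak convergence in a normed space, tested against all continuous linear
functionals. -/
def WSeqConv {X : Type*} [NormedAddCommGroup X] [NormedSpace ℝ X]
    (u : ℕ → X) (u₀ : X) : Prop :=
  ∀ f : X →L[ℝ] ℝ, Tendsto (fun m => f (u m)) atTop (𝓝 (f u₀))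

open scoped ENNReal

theorem Filter.Tendsto.extend_strictMono {T : Type*} [TopologicalSpace T] {w : ℕ → T} {a : T}
    (hw : Tendsto w atTop (𝓝 a)) {φ : ℕ → ℕ} (hφ : StrictMono φ) :
    Tendsto (Function.extend φ w fun _ => a) atTop (𝓝 a) := by
  intro s hs
  obtain ⟨N, hN⟩ := eventually_atTop.1 (hw hs)
  refine eventually_atTop.2 ⟨φ N, fun m hm => ?_⟩
  by_cases hrange : ∃ k, φ k = m
  · obtain ⟨k, rfl⟩ := hrange
    rw [hφ.injective.extend_apply]
    exact hN k (hφ.le_iff_le.1 hm)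
  · rw [Function.extend_apply' _ _ _ hrange]
    exact mem_of_mem_nhds hs

section WeakConvergence

variable {X Y : Type*} [NormedAddCommGroup X] [NormedSpace ℝ X]
  [NormedAddCommGroup Y] [NormedSpace ℝ Y] {u v : ℕ → X} {u₀ v₀ : X}

namespace WSeqConv

theorem sub (hu : WSeqConv u u₀) (hv : WSeqConv v v₀) :
    WSeqConv (fun m => u m - v m) (u₀ - v₀) := fun f => by
  simpa only [map_sub] using (hu f).sub (hv f)

theorem map (hu : WSeqConv u u₀) (A : X →L[ℝ] Y) : WSeqConv (fun m => A (u m)) (A u₀) :=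
  fun f => hu (f.comp A)

theorem extend (hu : WSeqConv u u₀) {φ : ℕ → ℕ} (hφ : StrictMono φ) :
    WSeqConv (Function.extend φ u fun _ => u₀) u₀ := fun f => by
  simpa only [Function.apply_extend, Function.comp_def] using (hu f).extend_strictMono hφ

-- Pad the subsequence with its weak limit to get a full sequence to which `hF` applies.
theorem le_liminf_comp_strictMono {F : ℕ → X → ℝ≥0∞} {F₀ : X → ℝ≥0∞}
    (hF : ∀ (z : ℕ → X) (z₀ : X), WSeqConv z z₀ → F₀ z₀ ≤ liminf (fun m => F m (z m)) atTop)
    (hu : WSeqConv u u₀) {φ : ℕ → ℕ} (hφ : StrictMono φ) :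
    F₀ u₀ ≤ liminf (fun k => F (φ k) (u k)) atTop := by
  set z := Function.extend φ u fun _ => u₀
  calc F₀ u₀ ≤ liminf (fun m => F m (z m)) atTop := hF z u₀ (hu.extend hφ)
    _ ≤ liminf ((fun m => F m (z m)) ∘ φ) atTop := hφ.tendsto_atTop.liminf_le_liminf_comp
    _ = liminf (fun k => F (φ k) (u k)) atTop := by
      simp only [Function.comp_def, z, hφ.injective.extend_apply]

end WSeqConv

end WeakConvergence

namespace ENNReal

variable {α : Type*} {l : Filter α} {x y z : α → ℝ≥0∞} {a b c s : ℝ≥0∞}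

theorem le_liminf_add : liminf x l + liminf y l ≤ liminf (fun k => x k + y k) l := by
  rcases eq_or_ne (liminf x l) 0 with hx | hx
  · rw [hx, zero_add]
    exact liminf_le_liminf (Eventually.of_forall fun k => le_add_self)
  rcases eq_or_ne (liminf y l) 0 with hy | hy
  · rw [hy, add_zero]
    exact liminf_le_liminf (Eventually.of_forall fun k => le_self_add)
  refine le_of_forall_lt fun e he => ?_
  obtain ⟨a, ha, b, hb, hab⟩ := exists_lt_add_of_lt_add he hx hy
  refine hab.trans_le (le_liminf_of_le (by isBoundedDefault) ?_)
  filter_upwards [eventually_lt_of_lt_liminf ha, eventually_lt_of_lt_liminf hb] with k hxk hyk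
  exact add_le_add hxk.le hyk.le

theorem le_limsup_add [l.NeBot] : limsup x l + liminf y l ≤ limsup (fun k => x k + y k) l := by
  rcases eq_or_ne (limsup x l) 0 with hx | hx
  · rw [hx, zero_add]
    exact (liminf_le_liminf (Eventually.of_forall fun k => le_add_self)).trans liminf_le_limsup
  rcases eq_or_ne (liminf y l) 0 with hy | hy
  · rw [hy, add_zero]
    exact limsup_le_limsup (Eventually.of_forall fun k => le_self_add)
  refine le_of_forall_lt fun e he => ?_
  obtain ⟨a, ha, b, hb, hab⟩ := exists_lt_add_of_lt_add he hx hy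
  refine hab.trans_le (le_limsup_of_frequently_le ?_)
  exact ((frequently_lt_of_lt_limsup (by isBoundedDefault) ha).and_eventually
    (eventually_lt_of_lt_liminf hb)).mono fun k hk => add_le_add hk.1.le hk.2.le

theorem const_mul_le_liminf_const_mul [l.NeBot] (hs : s ≠ ⊤) (hx : a ≤ liminf x l) :
    s * a ≤ liminf (fun k => s * x k) l := by
  rw [liminf_const_mul_of_ne_top hs]
  gcongr

theorem tendsto_const_mul_iff (hs₀ : s ≠ 0) (hs : s ≠ ⊤) :
    Tendsto (fun k => s * x k) l (𝓝 (s * a)) ↔ Tendsto x l (𝓝 a) := by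
  refine ⟨fun h => ?_, fun h => Tendsto.const_mul h (Or.inr hs)⟩
  simpa only [← mul_assoc, ENNReal.inv_mul_cancel hs₀ hs, one_mul] using
    Tendsto.const_mul h (Or.inr (inv_ne_top.2 hs₀))

theorem add_le_of_tendsto_add [l.NeBot] (hsum : Tendsto (fun k => x k + y k) l (𝓝 s))
    (hx : a ≤ liminf x l) (hy : b ≤ liminf y l) : a + b ≤ s :=
  calc a + b ≤ liminf x l + liminf y l := add_le_add hx hy
    _ ≤ liminf (fun k => x k + y k) l := le_liminf_add
    _ = s := hsum.liminf_eq

theorem tendsto_of_tendsto_add [l.NeBot] (hsum : Tendsto (fun k => x k + y k) l (𝓝 (a + b)))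
    (hx : a ≤ liminf x l) (hy : b ≤ liminf y l) (hb : b ≠ ⊤) : Tendsto x l (𝓝 a) := by
  refine tendsto_of_le_liminf_of_limsup_le hx ((ENNReal.add_le_add_iff_right hb).1 ?_)
  calc limsup x l + b ≤ limsup x l + liminf y l := by gcongr
    _ ≤ limsup (fun k => x k + y k) l := le_limsup_add
    _ = a + b := hsum.limsup_eq

theorem tendsto_of_tendsto_add_add [l.NeBot]
    (hsum : Tendsto (fun k => x k + y k + z k) l (𝓝 s)) (hs_le : s ≤ a + b + c) (hs : s ≠ ⊤)
    (hx : a ≤ liminf x l) (hy : b ≤ liminf y l) (hz : c ≤ liminf z l) :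
    a + b + c = s ∧ Tendsto x l (𝓝 a) ∧ Tendsto y l (𝓝 b) ∧ Tendsto z l (𝓝 c) := by
  have hxy : a + b ≤ liminf (fun k => x k + y k) l := (add_le_add hx hy).trans le_liminf_add
  have hyz : b + c ≤ liminf (fun k => y k + z k) l := (add_le_add hy hz).trans le_liminf_add
  have hxz : a + c ≤ liminf (fun k => x k + z k) l := (add_le_add hx hz).trans le_liminf_add
  have habc : a + b + c = s := le_antisymm (add_le_of_tendsto_add hsum hxy hz) hs_le
  subst habc
  obtain ⟨⟨ha, hb⟩, hc⟩ : (a ≠ ⊤ ∧ b ≠ ⊤) ∧ c ≠ ⊤ := by simpa only [add_ne_top] using hs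
  refine ⟨rfl, tendsto_of_tendsto_add ?_ hx hyz (add_ne_top.2 ⟨hb, hc⟩),
    tendsto_of_tendsto_add ?_ hy hxz (add_ne_top.2 ⟨ha, hc⟩),
    tendsto_of_tendsto_add ?_ hz hxy (add_ne_top.2 ⟨ha, hb⟩)⟩ <;>
  convert hsum using 2 <;> ring

end ENNReal

theorem stmt_15_general
    -- X = L^q(Ω) with q ∈ (1,2], Ω ⊂ ℝ^d a bounded domain
    {d : ℕ} (Ω : Set (Fin d → ℝ))
    (q : ℝ) [Fact (1 ≤ ENNReal.ofReal q)]
    {Y : Type*} [NormedAddCommGroup Y] [NormedSpace ℝ Y]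
    -- the forward operator
    (A : Lp ℝ (ENNReal.ofReal q) (volume.restrict Ω) →L[ℝ] Y)
    -- the data-fidelity term: proper, coercive, weakly lsc, convex
    (D : Y → ENNReal)
    -- the generative prior: proper, coercive, weakly lsc
    (G : Lp ℝ (ENNReal.ofReal q) (volume.restrict Ω) → ENNReal)
    (hGlsc : ∀ (v : ℕ → Lp ℝ (ENNReal.ofReal q) (volume.restrict Ω)) v₀,
      WSeqConv v v₀ → G v₀ ≤ Filter.liminf (fun m => G (v m)) atTop)
    -- the second regularizer: proper, weakly lsc
    (R : Lp ℝ (ENNReal.ofReal q) (volume.restrict Ω) → ENNReal)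
    (hRlsc : ∀ (u : ℕ → Lp ℝ (ENNReal.ofReal q) (volume.restrict Ω)) u₀,
      WSeqConv u u₀ → R u₀ ≤ Filter.liminf (fun m => R (u m)) atTop)
    -- the positive weights
    (lam sR sG : ENNReal) (hlam : 0 < lam) (hlam' : lam ≠ ⊤)
    (hsR : 0 < sR) (hsR' : sR ≠ ⊤) (hsG : 0 < sG) (hsG' : sG ≠ ⊤)
    -- the perturbed data terms D_{y_m}, converging to D
    (Dm : ℕ → Y → ENNReal)
    (hDm1 : ∀ (z : ℕ → Y) (z₀ : Y), WSeqConv z z₀ →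
      D z₀ ≤ Filter.liminf (fun m => Dm m (z m)) atTop)
    -- (u_m, v_m) minimizes the perturbed energy E_{y_m}
    (u v : ℕ → Lp ℝ (ENNReal.ofReal q) (volume.restrict Ω))
    -- c = min E_y is attained and finite, and the minimal perturbed energies converge to c
    (c : ENNReal) (hc : c ≠ ⊤)
    (hcmin : IsLeast (Set.range (fun p : (Lp ℝ (ENNReal.ofReal q) (volume.restrict Ω)) ×
      (Lp ℝ (ENNReal.ofReal q) (volume.restrict Ω)) =>
        lam * D (A p.1) + sR * R (p.1 - p.2) + sG * G p.2)) c)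
    (henergy : Tendsto
      (fun m => lam * Dm m (A (u m)) + sR * R (u m - v m) + sG * G (v m)) atTop (𝓝 c))
    -- a weakly convergent subsequence of the minimizers
    (φ : ℕ → ℕ) (hφ : StrictMono φ)
    (ustar vstar : Lp ℝ (ENNReal.ofReal q) (volume.restrict Ω))
    (hu : WSeqConv (fun k => u (φ k)) ustar) (hv : WSeqConv (fun k => v (φ k)) vstar) :
    -- the weak limit is a minimizer and each term converges individually
    lam * D (A ustar) + sR * R (ustar - vstar) + sG * G vstar = c ∧
    Tendsto (fun k => Dm (φ k) (A (u (φ k)))) atTop (𝓝 (D (A ustar))) ∧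
    Tendsto (fun k => R (u (φ k) - v (φ k))) atTop (𝓝 (R (ustar - vstar))) ∧
    Tendsto (fun k => G (v (φ k))) atTop (𝓝 (G vstar)) := by
  have hD := (hu.map A).le_liminf_comp_strictMono hDm1 hφ
  have hR := hRlsc _ _ (hu.sub hv)
  have hG := hGlsc _ _ hv
  obtain ⟨hmin, hDconv, hRconv, hGconv⟩ := ENNReal.tendsto_of_tendsto_add_add
    (henergy.comp hφ.tendsto_atTop) (hcmin.2 ⟨(ustar, vstar), rfl⟩) hc
    (ENNReal.const_mul_le_liminf_const_mul hlam' hD)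
    (ENNReal.const_mul_le_liminf_const_mul hsR' hR)
    (ENNReal.const_mul_le_liminf_const_mul hsG' hG)
  exact ⟨hmin, (ENNReal.tendsto_const_mul_iff hlam.ne' hlam').1 hDconv,
    (ENNReal.tendsto_const_mul_iff hsR.ne' hsR').1 hRconv,
    (ENNReal.tendsto_const_mul_iff hsG.ne' hsG').1 hGconv⟩

/-- Convergence of the individual energy terms along weakly convergent minimizing
subsequences (Theorem 2.13, final part). -/
theorem stmt_15
    -- X = L^q(Ω) with q ∈ (1,2], Ω ⊂ ℝ^d a bounded domain
    {d : ℕ} (Ω : Set (Fin d → ℝ)) (hΩo : IsOpen Ω) (hΩb : Bornology.IsBounded Ω)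
    (q : ℝ) (hq1 : 1 < q) (hq2 : q ≤ 2) [Fact (1 ≤ ENNReal.ofReal q)]
    {Y : Type*} [NormedAddCommGroup Y] [NormedSpace ℝ Y] [CompleteSpace Y]
    -- the forward operator
    (A : Lp ℝ (ENNReal.ofReal q) (volume.restrict Ω) →L[ℝ] Y)
    -- the data-fidelity term: proper, coercive, weakly lsc, convex
    (D : Y → ENNReal)
    (hDproper : ∃ z, D z ≠ ⊤)
    (hDcoercive : ∀ z : ℕ → Y, Tendsto (fun m => ‖z m‖) atTop atTop →
      Tendsto (fun m => D (z m)) atTop (𝓝 ⊤))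
    (hDlsc : ∀ (z : ℕ → Y) (z₀ : Y), WSeqConv z z₀ →
      D z₀ ≤ Filter.liminf (fun m => D (z m)) atTop)
    (hDconvex : ∀ (z w : Y) (t : ℝ), 0 ≤ t → t ≤ 1 →
      D (t • z + (1 - t) • w) ≤ ENNReal.ofReal t * D z + ENNReal.ofReal (1 - t) * D w)
    -- the generative prior: proper, coercive, weakly lsc
    (G : Lp ℝ (ENNReal.ofReal q) (volume.restrict Ω) → ENNReal)
    (hGproper : ∃ v, G v ≠ ⊤)
    (hGcoercive : ∀ v : ℕ → Lp ℝ (ENNReal.ofReal q) (volume.restrict Ω),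
      Tendsto (fun m => ‖v m‖) atTop atTop → Tendsto (fun m => G (v m)) atTop (𝓝 ⊤))
    (hGlsc : ∀ (v : ℕ → Lp ℝ (ENNReal.ofReal q) (volume.restrict Ω)) v₀,
      WSeqConv v v₀ → G v₀ ≤ Filter.liminf (fun m => G (v m)) atTop)
    -- the second regularizer: proper, weakly lsc
    (R : Lp ℝ (ENNReal.ofReal q) (volume.restrict Ω) → ENNReal)
    (hRproper : ∃ u, R u ≠ ⊤)
    (hRlsc : ∀ (u : ℕ → Lp ℝ (ENNReal.ofReal q) (volume.restrict Ω)) u₀,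
      WSeqConv u u₀ → R u₀ ≤ Filter.liminf (fun m => R (u m)) atTop)
    -- the closed subspace U of invariance of R, with continuous projection P_U
    (U : Submodule ℝ (Lp ℝ (ENNReal.ofReal q) (volume.restrict Ω)))
    (hUclosed : IsClosed (U : Set (Lp ℝ (ENNReal.ofReal q) (volume.restrict Ω))))
    (hRinv : ∀ u, ∀ w ∈ U, R (u + w) = R u)
    (PU : Lp ℝ (ENNReal.ofReal q) (volume.restrict Ω) →L[ℝ]
      Lp ℝ (ENNReal.ofReal q) (volume.restrict Ω))
    (hPUrange : ∀ u, PU u ∈ U) (hPUproj : ∀ u ∈ U, PU u = u)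
    (C : ℝ) (hC : 0 < C)
    (hPoincare : ∀ u, ENNReal.ofReal ‖u - PU u‖ ≤ ENNReal.ofReal C * R u)
    -- Z is a complement of U ∩ ker A in U, on which A is bounded below
    (Zc : Submodule ℝ (Lp ℝ (ENNReal.ofReal q) (volume.restrict Ω)))
    (hZU : Zc ≤ U)
    (hZdisj : Zc ⊓ (U ⊓ LinearMap.ker (A : Lp ℝ (ENNReal.ofReal q) (volume.restrict Ω) →ₗ[ℝ] Y)) = ⊥)
    (hZsup : Zc ⊔ (U ⊓ LinearMap.ker (A : Lp ℝ (ENNReal.ofReal q) (volume.restrict Ω) →ₗ[ℝ] Y)) = U)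
    (D₀ : ℝ) (hD₀ : 0 < D₀) (hAbelow : ∀ u ∈ Zc, ‖u‖ ≤ D₀ * ‖A u‖)
    -- the positive weights
    (lam sR sG : ENNReal) (hlam : 0 < lam) (hlam' : lam ≠ ⊤)
    (hsR : 0 < sR) (hsR' : sR ≠ ⊤) (hsG : 0 < sG) (hsG' : sG ≠ ⊤)
    -- the perturbed data terms D_{y_m}, converging to D
    (Dm : ℕ → Y → ENNReal)
    (hDm1 : ∀ (z : ℕ → Y) (z₀ : Y), WSeqConv z z₀ →
      D z₀ ≤ Filter.liminf (fun m => Dm m (z m)) atTop)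
    (hDm2 : ∀ z : Y, Filter.limsup (fun m => Dm m z) atTop ≤ D z)
    -- equi-coercivity of (D_{y_m})
    (hequi : ∃ D₀' : Y → ENNReal,
      (∀ z : ℕ → Y, Tendsto (fun m => ‖z m‖) atTop atTop →
        Tendsto (fun m => D₀' (z m)) atTop (𝓝 ⊤)) ∧
      ∀ m z, D₀' z ≤ Dm m z)
    -- (u_m, v_m) minimizes the perturbed energy E_{y_m}
    (u v : ℕ → Lp ℝ (ENNReal.ofReal q) (volume.restrict Ω))
    (hmin : ∀ m, ∀ u' v' : Lp ℝ (ENNReal.ofReal q) (volume.restrict Ω),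
      lam * Dm m (A (u m)) + sR * R (u m - v m) + sG * G (v m) ≤
        lam * Dm m (A u') + sR * R (u' - v') + sG * G v')
    -- c = min E_y is attained and finite, and the minimal perturbed energies converge to c
    (c : ENNReal) (hc : c ≠ ⊤)
    (hcmin : IsLeast (Set.range (fun p : (Lp ℝ (ENNReal.ofReal q) (volume.restrict Ω)) ×
      (Lp ℝ (ENNReal.ofReal q) (volume.restrict Ω)) =>
        lam * D (A p.1) + sR * R (p.1 - p.2) + sG * G p.2)) c)
    (henergy : Tendsto
      (fun m => lam * Dm m (A (u m)) + sR * R (u m - v m) + sG * G (v m)) atTop (𝓝 c))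
    -- a weakly convergent subsequence of the minimizers
    (φ : ℕ → ℕ) (hφ : StrictMono φ)
    (ustar vstar : Lp ℝ (ENNReal.ofReal q) (volume.restrict Ω))
    (hu : WSeqConv (fun k => u (φ k)) ustar) (hv : WSeqConv (fun k => v (φ k)) vstar) :
    -- the weak limit is a minimizer and each term converges individually
    lam * D (A ustar) + sR * R (ustar - vstar) + sG * G vstar = c ∧
    Tendsto (fun k => Dm (φ k) (A (u (φ k)))) atTop (𝓝 (D (A ustar))) ∧
    Tendsto (fun k => R (u (φ k) - v (φ k))) atTop (𝓝 (R (ustar - vstar))) ∧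
    Tendsto (fun k => G (v (φ k))) atTop (𝓝 (G vstar)) :=
  stmt_15_general Ω q A D G hGlsc R hRlsc lam sR sG hlam hlam' hsR hsR' hsG hsG' Dm hDm1 u v c hc
    hcmin henergy φ hφ ustar vstar hu hv
end
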